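/- arXiv:2002.06912 — 4 statements merged into one kernel-verified Lean document; each statement's English description precedes it below -/
import Mathlib

section
/- Let D[X,Y] be a finite bipartite digraph in which for every pair u ∈ X, v ∈ Y at most one of (u,v),(v,u) is an arc, and let u ∈ X be a vertex. Set Y_1 = N^−(u), Y_2 = N^+(u) and X_2 = N^+(Y_2). Then sec_D(u) equals the number of pairs (a,c) with a ∈ Y_1, c ∈ X_2 such that a and c are non-adjacent in D. -/
variable {V : Type*}

/-- `l` is a cycle in the digraph with arc set `A`: distinct vertices, length ≥ 2,
consecutive arcs (cyclically). -/
def IsCycleIn (A : Set (V × V)) (l : List V) : Prop :=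
  l.Nodup ∧ 2 ≤ l.length ∧
    ∀ i : Fin l.length,
      (l.get i, l.get ⟨(i.1 + 1) % l.length, Nat.mod_lt _ i.pos⟩) ∈ A

/-- The digraph with arc set `A` has no cycles. -/
def Acyclic (A : Set (V × V)) : Prop := ∀ l : List V, ¬ IsCycleIn A l

/-- `F` is a feedback arc set of the digraph with arc set `A`. -/
def IsFAS (A F : Set (V × V)) : Prop := F ⊆ A ∧ Acyclic (A \ F)

/-- The arc set of the reversed digraph `D^R` (also serves as `F^R` for arc sets). -/
def rev (A : Set (V × V)) : Set (V × V) := {p | (p.2, p.1) ∈ A}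

/-- `(a,b,c,d)` is an induced path on four vertices. -/
def IsInducedP4 (A : Set (V × V)) (a b c d : V) : Prop :=
  a ≠ b ∧ a ≠ c ∧ a ≠ d ∧ b ≠ c ∧ b ≠ d ∧ c ≠ d ∧
    (a, b) ∈ A ∧ (b, c) ∈ A ∧ (c, d) ∈ A ∧
    (a, c) ∉ A ∧ (c, a) ∉ A ∧ (a, d) ∉ A ∧ (d, a) ∉ A ∧ (b, d) ∉ A ∧ (d, b) ∉ A

/-- `first_D(v)`: number of `~2`-equivalence classes of induced 4-vertex paths with `v`
as first vertex; such a class is determined by the (third, fourth) vertex pair. -/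
noncomputable def firstD (A : Set (V × V)) (v : V) : ℕ :=
  Set.ncard {p : V × V | ∃ b, IsInducedP4 A v b p.1 p.2}

/-- `sec_D(v)`: number of `~3`-equivalence classes of induced 4-vertex paths with `v`
as second vertex; such a class is determined by the (first, fourth) vertex pair. -/
noncomputable def secD (A : Set (V × V)) (v : V) : ℕ :=
  Set.ncard {p : V × V | ∃ c, IsInducedP4 A p.1 v c p.2}

/-- `Λ(D)` for a bipartite digraph with bipartition `(X, Y)`. -/
noncomputable def Lambda (A : Set (V × V)) (X Y : Set V) : ℕ :=
  Set.ncard {p : V × V | p.1 ∈ X ∧ p.2 ∈ Y ∧ (p.1, p.2) ∉ A ∧ (p.2, p.1) ∉ A}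

def Nplus (A : Set (V × V)) (v : V) : Set V := {w | (v, w) ∈ A}
def Nminus (A : Set (V × V)) (v : V) : Set V := {w | (w, v) ∈ A}
def NplusS (A : Set (V × V)) (S : Set V) : Set V := {w | ∃ v ∈ S, (v, w) ∈ A}

/-- Arc set of the subdigraph induced by the vertex set `S`. -/
def inducedArcs (A : Set (V × V)) (S : Set V) : Set (V × V) :=
  {p ∈ A | p.1 ∈ S ∧ p.2 ∈ S}

/-- The set of arcs of the cycle `l`. -/
def cycleArcs (l : List V) : Set (V × V) :=
  {p | ∃ i : Fin l.length, p = (l.get i, l.get ⟨(i.1 + 1) % l.length, Nat.mod_lt _ i.pos⟩)}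

/-- A cycle is induced (chordless) if every arc between its vertices joins cyclically
consecutive vertices. -/
def IsInducedCycle (A : Set (V × V)) (l : List V) : Prop :=
  IsCycleIn A l ∧ ∀ i j : Fin l.length,
    (l.get i, l.get j) ∈ A → (j.1 = (i.1 + 1) % l.length ∨ i.1 = (j.1 + 1) % l.length)

/-- `(a,b,c,d)` is a 4-cycle. -/
def Is4Cycle (A : Set (V × V)) (q : V × V × V × V) : Prop :=
  q.1 ≠ q.2.1 ∧ q.1 ≠ q.2.2.1 ∧ q.1 ≠ q.2.2.2 ∧ q.2.1 ≠ q.2.2.1 ∧ q.2.1 ≠ q.2.2.2 ∧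
    q.2.2.1 ≠ q.2.2.2 ∧
    (q.1, q.2.1) ∈ A ∧ (q.2.1, q.2.2.1) ∈ A ∧ (q.2.2.1, q.2.2.2) ∈ A ∧ (q.2.2.2, q.1) ∈ A

/-- The arcs of the 4-cycle `q`. -/
def arcs4 (q : V × V × V × V) : Set (V × V) :=
  {(q.1, q.2.1), (q.2.1, q.2.2.1), (q.2.2.1, q.2.2.2), (q.2.2.2, q.1)}

/-- in a finite bipartite digraph with at most one arc direction between any
`u ∈ X`, `v ∈ Y`, for `u ∈ X` with `Y₁ = N⁻(u)`, `Y₂ = N⁺(u)`, `X₂ = N⁺(Y₂)`, the number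
`sec_D(u)` equals the number of non-adjacent pairs `(a, c)` with `a ∈ Y₁` and `c ∈ X₂`. -/
theorem stmt_8 {V : Type*} [Fintype V] (A : Set (V × V)) (X Y : Set V)
    (hV : X ∪ Y = Set.univ) (hXY : Disjoint X Y)
    (hbip : ∀ p ∈ A, (p.1 ∈ X ∧ p.2 ∈ Y) ∨ (p.1 ∈ Y ∧ p.2 ∈ X))
    (horient : ∀ u ∈ X, ∀ v ∈ Y, ¬((u, v) ∈ A ∧ (v, u) ∈ A))
    (u : V) (hu : u ∈ X)
    (Y1 Y2 X2 : Set V) (hY1 : Y1 = Nminus A u) (hY2 : Y2 = Nplus A u)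
    (hX2 : X2 = NplusS A Y2) :
    secD A u = Set.ncard {p : V × V | p.1 ∈ Y1 ∧ p.2 ∈ X2 ∧
      (p.1, p.2) ∉ A ∧ (p.2, p.1) ∉ A} := by
  unfold secD
  congr 1
  ext ⟨a, d⟩
  simp only [Set.mem_setOf_eq]
  constructor
  · rintro ⟨c, hab, hac, had, hbc, hbd, hcd, h1, h2, h3, nac, nca, nad, nda, nbd, ndb⟩
    refine ⟨?_, ?_, nad, nda⟩
    · rw [hY1]; exact h1
    · rw [hX2]; exact ⟨c, by rwa [hY2], h3⟩
  · rintro ⟨ha, hd, nad, nda⟩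
    rw [hY1] at ha
    rw [hX2] at hd
    obtain ⟨c, hc, hcd⟩ := hd
    rw [hY2] at hc
    -- memberships
    have haY : a ∈ Y := by
      rcases hbip _ ha with ⟨_, h⟩ | ⟨h, _⟩
      · exact absurd (hXY.ne_of_mem hu h rfl) (fun t => t)
      · exact h
    have hcY : c ∈ Y := by
      rcases hbip _ hc with ⟨_, h⟩ | ⟨h, _⟩
      · exact h
      · exact absurd (hXY.ne_of_mem hu h rfl) (fun t => t)
    have hdX : d ∈ X := by
      rcases hbip _ hcd with ⟨h, _⟩ | ⟨_, h⟩
      · exact absurd (hXY.ne_of_mem h hcY rfl) (fun t => t)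
      · exact h
    have noYY : ∀ x ∈ Y, ∀ y ∈ Y, (x, y) ∉ A := by
      intro x hx y hy hxy
      rcases hbip _ hxy with ⟨h, _⟩ | ⟨_, h⟩
      · exact hXY.ne_of_mem h hx rfl
      · exact hXY.ne_of_mem h hy rfl
    have noXX : ∀ x ∈ X, ∀ y ∈ X, (x, y) ∉ A := by
      intro x hx y hy hxy
      rcases hbip _ hxy with ⟨_, h⟩ | ⟨h, _⟩
      · exact hXY.ne_of_mem hy h rfl
      · exact hXY.ne_of_mem hx h rfl
    refine ⟨c, ?_, ?_, ?_, ?_, ?_, ?_, ha, hc, hcd, noYY a haY c hcY,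
      noYY c hcY a haY, nad, nda, noXX u hu d hdX, noXX d hdX u hu⟩
    · exact fun h => hXY.ne_of_mem hu haY h.symm
    · intro h; subst h; exact horient u hu a haY ⟨hc, ha⟩
    · exact fun h => hXY.ne_of_mem hdX haY h.symm
    · exact fun h => hXY.ne_of_mem hu hcY h
    · intro h; subst h; exact horient u hu c hcY ⟨hc, hcd⟩
    · exact fun h => hXY.ne_of_mem hdX hcY h.symm
end

section
/- Let D[X,Y] be a finite bipartite digraph in which for every pair u ∈ X, v ∈ Y at most one of (u,v),(v,u) is an arc, and let u ∈ X be a vertex. Set Y_1 = N^−(u), Y_2 = N^+(u), Y_3 = Y \ (Y_1 ∪ Y_2) and X_2 = N^+(Y_2). Then first_D(u) equals the number of arcs (x,y) of D with x ∈ X_2 and y ∈ Y_3. -/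
variable {V : Type*}

/-- in a finite bipartite digraph with at most one arc direction between any
`u ∈ X`, `v ∈ Y`, for `u ∈ X` with `Y₁ = N⁻(u)`, `Y₂ = N⁺(u)`, `Y₃ = Y \ (Y₁ ∪ Y₂)`,
`X₂ = N⁺(Y₂)`, the number `first_D(u)` equals the number of arcs `(x, y)` of `D` with
`x ∈ X₂` and `y ∈ Y₃`. -/
theorem stmt_9 {V : Type*} [Fintype V] (A : Set (V × V)) (X Y : Set V)
    (hV : X ∪ Y = Set.univ) (hXY : Disjoint X Y)
    (hbip : ∀ p ∈ A, (p.1 ∈ X ∧ p.2 ∈ Y) ∨ (p.1 ∈ Y ∧ p.2 ∈ X))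
    (horient : ∀ u ∈ X, ∀ v ∈ Y, ¬((u, v) ∈ A ∧ (v, u) ∈ A))
    (u : V) (hu : u ∈ X)
    (Y1 Y2 Y3 X2 : Set V) (hY1 : Y1 = Nminus A u) (hY2 : Y2 = Nplus A u)
    (hY3 : Y3 = Y \ (Y1 ∪ Y2)) (hX2 : X2 = NplusS A Y2) :
    firstD A u = Set.ncard {p : V × V | p ∈ A ∧ p.1 ∈ X2 ∧ p.2 ∈ Y3} := by
  have hdisj := Set.disjoint_left.mp hXY
  -- helper facts
  have inY : ∀ {x y : V}, (x, y) ∈ A → x ∈ X → y ∈ Y := by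
    intro x y h hx
    rcases hbip _ h with ⟨_, hy⟩ | ⟨hx', _⟩
    · exact hy
    · exact absurd hx' (fun h' => hdisj hx h')
  have inX : ∀ {x y : V}, (x, y) ∈ A → x ∈ Y → y ∈ X := by
    intro x y h hx
    rcases hbip _ h with ⟨hx', _⟩ | ⟨_, hy⟩
    · exact absurd hx (fun h' => hdisj hx' h')
    · exact hy
  have noXX : ∀ {x y : V}, x ∈ X → y ∈ X → (x, y) ∉ A := by
    intro x y hx hy h
    rcases hbip _ h with ⟨_, hy'⟩ | ⟨hx', _⟩
    · exact hdisj hy hy'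
    · exact hdisj hx hx'
  have noYY : ∀ {x y : V}, x ∈ Y → y ∈ Y → (x, y) ∉ A := by
    intro x y hx hy h
    rcases hbip _ h with ⟨hx', _⟩ | ⟨_, hy'⟩
    · exact hdisj hx' hx
    · exact hdisj hy' hy
  unfold firstD
  congr 1
  ext ⟨c, d⟩
  simp only [Set.mem_setOf_eq]
  constructor
  · rintro ⟨b, h1, h2, h3, h4, h5, h6, hub, hbc, hcd, huc, hcu, hud, hdu, hbd, hdb⟩
    have hbY : b ∈ Y := inY hub hu
    have hcX : c ∈ X := inX hbc hbY
    have hdY : d ∈ Y := inY hcd hcX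
    refine ⟨hcd, ?_, ?_⟩
    · rw [hX2]; exact ⟨b, by rw [hY2]; exact hub, hbc⟩
    · rw [hY3]
      refine ⟨hdY, ?_⟩
      rintro (h | h)
      · rw [hY1] at h; exact hdu h
      · rw [hY2] at h; exact hud h
  · rintro ⟨hcd, hcX2, hdY3⟩
    rw [hX2] at hcX2
    obtain ⟨b, hbY2, hbc⟩ := hcX2
    rw [hY2] at hbY2
    have hub : (u, b) ∈ A := hbY2
    have hbY : b ∈ Y := inY hub hu
    have hcX : c ∈ X := inX hbc hbY
    rw [hY3] at hdY3
    obtain ⟨hdY, hdn⟩ := hdY3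
    have hdu : (d, u) ∉ A := fun h => hdn (Or.inl (by rw [hY1]; exact h))
    have hud : (u, d) ∉ A := fun h => hdn (Or.inr (by rw [hY2]; exact h))
    refine ⟨b, ?_, ?_, ?_, ?_, ?_, ?_, hub, hbc, hcd, noXX hu hcX,
      noXX hcX hu, hud, hdu, noYY hbY hdY, noYY hdY hbY⟩
    · exact fun h => hdisj hu (h ▸ hbY)
    · rintro rfl; exact horient u hu b hbY ⟨hub, hbc⟩
    · exact fun h => hdisj hu (h ▸ hdY)
    · exact fun h => hdisj hcX (h ▸ hbY) |>.elim
    · rintro rfl; exact hdn (Or.inr (by rw [hY2]; exact hub))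
    · exact fun h => hdisj hcX (h ▸ hdY)
end

section
/- Let D[X,Y] be a bipartite digraph with no 4-cycles and let u ∈ X be a vertex. Set Y_1 = N^−(u), Y_2 = N^+(u), Y_3 = Y \ (Y_1 ∪ Y_2), X_2 = N^+(Y_2) and X_1 = X \ (X_2 ∪ {u}). Let D_1 = D[X_1, Y_1 ∪ Y_3] and D_2 = D[X_2 ∪ {u}, Y_2] be the corresponding induced subdigraphs, let E be the set of arcs (x,y) of D with x ∈ X_2 and y ∈ Y_3, and let F_1 and F_2 be feedback arc sets of D_1 and D_2, respectively. Then F = F_1 ∪ F_2 ∪ E is a feedback arc set of D. -/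
variable {V : Type*}

/-- in a bipartite digraph with no 4-cycles, with `u ∈ X` and the sets
`Y₁ = N⁻(u)`, `Y₂ = N⁺(u)`, `Y₃ = Y \ (Y₁ ∪ Y₂)`, `X₂ = N⁺(Y₂)`, `X₁ = X \ (X₂ ∪ {u})`,
if `F₁`, `F₂` are feedback arc sets of the induced subdigraphs `D₁ = D[X₁, Y₁ ∪ Y₃]` and
`D₂ = D[X₂ ∪ {u}, Y₂]` and `E` is the set of arcs from `X₂` to `Y₃`, then `F₁ ∪ F₂ ∪ E`
is a feedback arc set of `D`. -/
theorem stmt_10 {V : Type*} (A : Set (V × V)) (X Y : Set V)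
    (hV : X ∪ Y = Set.univ) (hXY : Disjoint X Y)
    (hbip : ∀ p ∈ A, (p.1 ∈ X ∧ p.2 ∈ Y) ∨ (p.1 ∈ Y ∧ p.2 ∈ X))
    (h4 : ¬ ∃ l : List V, IsCycleIn A l ∧ l.length = 4)
    (u : V) (hu : u ∈ X)
    (Y1 Y2 Y3 X2 X1 : Set V) (hY1 : Y1 = Nminus A u) (hY2 : Y2 = Nplus A u)
    (hY3 : Y3 = Y \ (Y1 ∪ Y2)) (hX2 : X2 = NplusS A Y2) (hX1 : X1 = X \ (X2 ∪ {u}))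
    (E F1 F2 : Set (V × V)) (hE : E = {p ∈ A | p.1 ∈ X2 ∧ p.2 ∈ Y3})
    (hF1 : IsFAS (inducedArcs A (X1 ∪ (Y1 ∪ Y3))) F1)
    (hF2 : IsFAS (inducedArcs A ((X2 ∪ {u}) ∪ Y2)) F2) :
    IsFAS A (F1 ∪ F2 ∪ E) := by
  have hdisj : ∀ {v}, v ∈ X → v ∉ Y := fun hv => Set.disjoint_left.mp hXY hv
  have hY2Y : Y2 ⊆ Y := by
    intro y hy
    rw [hY2] at hy
    rcases hbip _ hy with ⟨_, h⟩ | ⟨h, _⟩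
    · exact h
    · exact absurd h (hdisj hu)
  have hX2X : X2 ⊆ X := by
    intro x hx
    rw [hX2] at hx
    obtain ⟨y, hy, hyx⟩ := hx
    rcases hbip _ hyx with ⟨h, _⟩ | ⟨_, h⟩
    · exact absurd (hY2Y hy) (hdisj h)
    · exact h
  set P2 : Set V := (X2 ∪ {u}) ∪ Y2 with hP2
  have key : ∀ a b : V, (a, b) ∈ A \ (F1 ∪ F2 ∪ E) → a ∈ P2 → b ∈ P2 := by
    rintro a b ⟨hA, hF⟩ ha
    rcases ha with (ha | ha) | ha
    · -- a ∈ X2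
      have haX : a ∈ X := hX2X ha
      have hbY : b ∈ Y := by
        rcases hbip _ hA with ⟨_, h⟩ | ⟨h, _⟩
        · exact h
        · exact absurd h (hdisj haX)
      by_cases hb2 : b ∈ Y2
      · exact Or.inr hb2
      have hb3 : b ∉ Y3 := by
        intro hb3
        exact hF (Or.inr (by rw [hE]; exact ⟨hA, ha, hb3⟩))
      have hb1 : b ∈ Y1 := by
        rw [hY3] at hb3
        by_contra hb1
        exact hb3 ⟨hbY, by rintro (h | h) <;> [exact hb1 h; exact hb2 h]⟩
      -- build a 4-cycle u → y2 → a → b → u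
      obtain ⟨y2, hy2, hy2a⟩ : ∃ v ∈ Y2, (v, a) ∈ A := by rw [hX2] at ha; exact ha
      exfalso
      apply h4
      refine ⟨[u, y2, a, b], ⟨?_, by simp, ?_⟩, rfl⟩
      · have huy2 : u ≠ y2 := fun h => hdisj hu (h ▸ hY2Y hy2)
        have hua : u ≠ a := by
          rintro rfl
          exact hb2 (by rw [hY2]; exact hA)
        have hub : u ≠ b := fun h => hdisj hu (h ▸ hbY)
        have hy2a' : y2 ≠ a := fun h => hdisj haX (h ▸ hY2Y hy2)
        have hy2b : y2 ≠ b := fun h => hb2 (h ▸ hy2)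
        have hab : a ≠ b := fun h => hdisj haX (h ▸ hbY)
        simp [List.nodup_cons, huy2, hua, hub, hy2a', hy2b, hab]
      · intro i
        have hbu : (b, u) ∈ A := by rw [hY1] at hb1; exact hb1
        have huy2A : (u, y2) ∈ A := by rw [hY2] at hy2; exact hy2
        fin_cases i <;> simpa using (by first
          | exact huy2A | exact hy2a | exact hA | exact hbu)
    · -- a = u
      rcases ha with rfl
      exact Or.inr (by rw [hY2]; exact hA)
    · -- a ∈ Y2
      exact Or.inl (Or.inl (by rw [hX2]; exact ⟨a, ha, hA⟩))
  constructor
  · rintro p ((hp | hp) | hp)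
    · exact (hF1.1 hp).1
    · exact (hF2.1 hp).1
    · rw [hE] at hp; exact hp.1
  · intro l hl
    obtain ⟨hnd, hlen, harc⟩ := hl
    have pos : 0 < l.length := by omega
    by_cases hex : ∃ i : Fin l.length, l.get i ∈ P2
    · obtain ⟨i, hi⟩ := hex
      have hk : ∀ k : ℕ, l.get ⟨(i.1 + k) % l.length, Nat.mod_lt _ pos⟩ ∈ P2 := by
        intro k
        induction k with
        | zero =>
          simpa [Nat.mod_eq_of_lt i.2] using hi
        | succ k ih =>
          have h1 := key _ _ (harc ⟨(i.1 + k) % l.length, Nat.mod_lt _ pos⟩) ih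
          have e : ((i.1 + k) % l.length + 1) % l.length = (i.1 + (k + 1)) % l.length := by
            rw [Nat.mod_add_mod, Nat.add_assoc]
          have e2 : (⟨((i.1 + k) % l.length + 1) % l.length, Nat.mod_lt _ pos⟩ : Fin l.length)
              = ⟨(i.1 + (k + 1)) % l.length, Nat.mod_lt _ pos⟩ := Fin.ext e
          rwa [e2] at h1
      have hall : ∀ j : Fin l.length, l.get j ∈ P2 := by
        intro j
        have e : (i.1 + (j.1 + l.length - i.1)) % l.length = j.1 := by
          have : i.1 + (j.1 + l.length - i.1) = j.1 + l.length := by omega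
          rw [this, Nat.add_mod_right, Nat.mod_eq_of_lt j.2]
        have := hk (j.1 + l.length - i.1)
        rwa [show (⟨(i.1 + (j.1 + l.length - i.1)) % l.length, Nat.mod_lt _ pos⟩ : Fin l.length) = j from Fin.ext e] at this
      exact hF2.2 l ⟨hnd, hlen, fun i =>
        ⟨⟨(harc i).1, hall i, hall _⟩, fun hmem => (harc i).2 (Or.inl (Or.inr hmem))⟩⟩
    · push_neg at hex
      have hall : ∀ j : Fin l.length, l.get j ∈ X1 ∪ (Y1 ∪ Y3) := by
        intro j
        have hnp := hex j
        have hv : l.get j ∈ X ∪ Y := hV ▸ Set.mem_univ _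
        rcases hv with hv | hv
        · left
          rw [hX1]
          refine ⟨hv, ?_⟩
          rintro (h | h)
          · exact hnp (Or.inl (Or.inl h))
          · exact hnp (Or.inl (Or.inr h))
        · right
          by_cases h1 : l.get j ∈ Y1
          · exact Or.inl h1
          · refine Or.inr ?_
            rw [hY3]
            refine ⟨hv, ?_⟩
            rintro (h | h)
            · exact h1 h
            · exact hnp (Or.inr h)
      exact hF1.2 l ⟨hnd, hlen, fun i =>
        ⟨⟨(harc i).1, hall i, hall _⟩, fun hmem => (harc i).2 (Or.inl (Or.inl hmem))⟩⟩
end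

section
/- Let D[X,Y] be a finite bipartite digraph in which for every pair u ∈ X, v ∈ Y at most one of (u,v),(v,u) is an arc, and let u ∈ X be a vertex. Set Y_1 = N^−(u), Y_2 = N^+(u), Y_3 = Y \ (Y_1 ∪ Y_2), X_2 = N^+(Y_2) and X_1 = X \ (X_2 ∪ {u}), and let D_1 = D[X_1, Y_1 ∪ Y_3] and D_2 = D[X_2 ∪ {u}, Y_2] be the corresponding induced subdigraphs. Then Λ(D) ≥ Λ(D_1) + Λ(D_2) + sec_D(u). -/
variable {V : Type*}

/-- in a finite bipartite digraph with at most one arc direction between any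
`u ∈ X`, `v ∈ Y`, for `u ∈ X` with `Y₁ = N⁻(u)`, `Y₂ = N⁺(u)`, `Y₃ = Y \ (Y₁ ∪ Y₂)`,
`X₂ = N⁺(Y₂)`, `X₁ = X \ (X₂ ∪ {u})`, and the induced subdigraphs `D₁ = D[X₁, Y₁ ∪ Y₃]`,
`D₂ = D[X₂ ∪ {u}, Y₂]`, one has `Λ(D) ≥ Λ(D₁) + Λ(D₂) + sec_D(u)`. -/
theorem stmt_11 {V : Type*} [Fintype V] (A : Set (V × V)) (X Y : Set V)
    (hV : X ∪ Y = Set.univ) (hXY : Disjoint X Y)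
    (hbip : ∀ p ∈ A, (p.1 ∈ X ∧ p.2 ∈ Y) ∨ (p.1 ∈ Y ∧ p.2 ∈ X))
    (horient : ∀ u ∈ X, ∀ v ∈ Y, ¬((u, v) ∈ A ∧ (v, u) ∈ A))
    (u : V) (hu : u ∈ X)
    (Y1 Y2 Y3 X2 X1 : Set V) (hY1 : Y1 = Nminus A u) (hY2 : Y2 = Nplus A u)
    (hY3 : Y3 = Y \ (Y1 ∪ Y2)) (hX2 : X2 = NplusS A Y2) (hX1 : X1 = X \ (X2 ∪ {u})) :
    Lambda (inducedArcs A (X1 ∪ (Y1 ∪ Y3))) X1 (Y1 ∪ Y3)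
      + Lambda (inducedArcs A ((X2 ∪ {u}) ∪ Y2)) (X2 ∪ {u}) Y2
      + secD A u ≤ Lambda A X Y := by
  have hdisj := Set.disjoint_left.mp hXY
  have harcXY : ∀ x y : V, (x, y) ∈ A → x ∈ X → y ∈ Y := by
    intro x y h hx
    rcases hbip _ h with ⟨_, hy⟩ | ⟨hy, _⟩
    · exact hy
    · exact absurd hy (hdisj hx)
  have harcYX : ∀ x y : V, (x, y) ∈ A → x ∈ Y → y ∈ X := by
    intro x y h hx
    rcases hbip _ h with ⟨hy, _⟩ | ⟨_, hy⟩
    · exact absurd hx (hdisj hy)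
    · exact hy
  have harcToX : ∀ x y : V, (x, y) ∈ A → y ∈ X → x ∈ Y := by
    intro x y h hy
    rcases hbip _ h with ⟨_, hy'⟩ | ⟨hx, _⟩
    · exact absurd hy' (hdisj hy)
    · exact hx
  have hY1Y : Y1 ⊆ Y := by
    intro a ha; rw [hY1] at ha; exact harcToX a u ha hu
  have hY2Y : Y2 ⊆ Y := by
    intro a ha; rw [hY2] at ha; exact harcXY u a ha hu
  have hY3Y : Y3 ⊆ Y := by rw [hY3]; exact Set.diff_subset
  have hX2X : X2 ⊆ X := by
    intro w hw; rw [hX2] at hw; obtain ⟨v, hv, hvw⟩ := hw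
    exact harcYX v w hvw (hY2Y hv)
  have hX1X : X1 ⊆ X := by rw [hX1]; exact Set.diff_subset
  have hY12 : ∀ a, a ∈ Y1 → a ∈ Y2 → False := by
    intro a h1 h2
    rw [hY1] at h1; rw [hY2] at h2
    exact horient u hu a (hY1Y (by rw [hY1]; exact h1)) ⟨h2, h1⟩
  set T := {p : V × V | p.1 ∈ X ∧ p.2 ∈ Y ∧ (p.1, p.2) ∉ A ∧ (p.2, p.1) ∉ A} with hT
  set S1 := {p : V × V | p.1 ∈ X1 ∧ p.2 ∈ Y1 ∪ Y3 ∧ (p.1, p.2) ∉ A ∧ (p.2, p.1) ∉ A} with hS1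
  set S2 := {p : V × V | p.1 ∈ X2 ∪ {u} ∧ p.2 ∈ Y2 ∧ (p.1, p.2) ∉ A ∧ (p.2, p.1) ∉ A} with hS2
  set S3 := {p : V × V | ∃ c, IsInducedP4 A p.2 u c p.1} with hS3
  have hL1 : Lambda (inducedArcs A (X1 ∪ (Y1 ∪ Y3))) X1 (Y1 ∪ Y3) = S1.ncard := by
    unfold Lambda
    congr 1
    ext p
    simp only [hS1, Set.mem_setOf_eq, inducedArcs]
    constructor
    · rintro ⟨h1, h2, h3, h4⟩
      exact ⟨h1, h2, fun hA => h3 ⟨hA, Or.inl h1, Or.inr h2⟩,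
        fun hA => h4 ⟨hA, Or.inr h2, Or.inl h1⟩⟩
    · rintro ⟨h1, h2, h3, h4⟩
      exact ⟨h1, h2, fun hA => h3 hA.1, fun hA => h4 hA.1⟩
  have hL2 : Lambda (inducedArcs A ((X2 ∪ {u}) ∪ Y2)) (X2 ∪ {u}) Y2 = S2.ncard := by
    unfold Lambda
    congr 1
    ext p
    simp only [hS2, Set.mem_setOf_eq, inducedArcs]
    constructor
    · rintro ⟨h1, h2, h3, h4⟩
      exact ⟨h1, h2, fun hA => h3 ⟨hA, Or.inl h1, Or.inr h2⟩,
        fun hA => h4 ⟨hA, Or.inr h2, Or.inl h1⟩⟩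
    · rintro ⟨h1, h2, h3, h4⟩
      exact ⟨h1, h2, fun hA => h3 hA.1, fun hA => h4 hA.1⟩
  have hL3 : secD A u = S3.ncard := by
    unfold secD
    have himg : S3 = Prod.swap '' {p : V × V | ∃ c, IsInducedP4 A p.1 u c p.2} := by
      ext q
      simp only [hS3, Set.mem_image, Set.mem_setOf_eq, Prod.exists]
      constructor
      · rintro ⟨c, h⟩
        exact ⟨q.2, q.1, ⟨c, h⟩, rfl⟩
      · rintro ⟨a, d, ⟨c, h⟩, hq⟩
        rw [← hq]
        exact ⟨c, h⟩
    rw [himg, Set.ncard_image_of_injective _ Prod.swap_injective]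
  rw [hL1, hL2, hL3]
  -- facts about members of S3
  have hS3fact : ∀ q ∈ S3, q.2 ∈ Y1 ∧ q.1 ∈ X2 ∧ (q.1, q.2) ∉ A ∧ (q.2, q.1) ∉ A := by
    rintro q ⟨c, h⟩
    obtain ⟨_, _, _, _, _, _, hab, hbc, hcd, _, _, hnad, hnda, _, _⟩ := h
    refine ⟨?_, ?_, hnda, hnad⟩
    · rw [hY1]; exact hab
    · rw [hX2]; exact ⟨c, by rw [hY2]; exact hbc, hcd⟩
  have hS1T : S1 ⊆ T := by
    rintro p ⟨h1, h2, h3, h4⟩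
    refine ⟨hX1X h1, ?_, h3, h4⟩
    rcases h2 with h | h
    · exact hY1Y h
    · exact hY3Y h
  have hS2T : S2 ⊆ T := by
    rintro p ⟨h1, h2, h3, h4⟩
    refine ⟨?_, hY2Y h2, h3, h4⟩
    rcases h1 with h | h
    · exact hX2X h
    · exact h ▸ hu
  have hS3T : S3 ⊆ T := by
    intro q hq
    obtain ⟨ha, hd, hn1, hn2⟩ := hS3fact q hq
    exact ⟨hX2X hd, hY1Y ha, hn1, hn2⟩
  have h12 : Disjoint S1 S2 := by
    rw [Set.disjoint_left]
    rintro p ⟨h1, _, _, _⟩ ⟨h1', _, _, _⟩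
    rw [hX1] at h1
    exact h1.2 h1'
  have h13 : Disjoint S1 S3 := by
    rw [Set.disjoint_left]
    rintro p ⟨h1, _, _, _⟩ hp3
    obtain ⟨_, hd, _, _⟩ := hS3fact p hp3
    rw [hX1] at h1
    exact h1.2 (Or.inl hd)
  have h23 : Disjoint S2 S3 := by
    rw [Set.disjoint_left]
    rintro p ⟨_, h2, _, _⟩ hp3
    obtain ⟨ha, _, _, _⟩ := hS3fact p hp3
    exact hY12 p.2 ha h2
  calc S1.ncard + S2.ncard + S3.ncard
      = (S1 ∪ S2 ∪ S3).ncard := by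
        rw [Set.ncard_union_eq (Set.disjoint_union_left.mpr ⟨h13, h23⟩)
            (Set.toFinite _) (Set.toFinite _),
          Set.ncard_union_eq h12 (Set.toFinite _) (Set.toFinite _)]
    _ ≤ T.ncard := Set.ncard_le_ncard
        (Set.union_subset (Set.union_subset hS1T hS2T) hS3T) (Set.toFinite _)
end
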